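/- Let f : ℝⁿ → ℝ ∪ {+∞} be proper lsc, bounded below, continuous on its domain, and a KL function. Fix 0 < λ̄ ≤ λ̃ < ∞, θ ∈ (0,1], b > 0, and let {x_k} be an inexact proximal sequence: for each k there are λ_k ∈ [λ̄, λ̃] and w_{k+1} ∈ ∂f(x_{k+1}) with f(x_{k+1}) + (θλ_k/2)‖x_{k+1} − x_k‖² ≤ f(x_k) and ‖w_{k+1}‖ ≤ bλ_k‖x_{k+1} − x_k‖, with x_0 ∈ dom f. If {x_k} is bounded, then it converges to a critical point of f. -/

import Mathlib

open Filter

/-- The Fréchet subdifferential of an extended-real-valued function. -/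
def frechetSubdiff {n : ℕ} (f : EuclideanSpace ℝ (Fin n) → EReal)
    (x : EuclideanSpace ℝ (Fin n)) : Set (EuclideanSpace ℝ (Fin n)) :=
  {v | f x ≠ ⊤ ∧ ∀ ε : ℝ, 0 < ε → ∀ᶠ y in nhds x,
      f x + (((inner ℝ v (y - x) : ℝ) - ε * ‖y - x‖ : ℝ) : EReal) ≤ f y}

/-- The limiting (Mordukhovich) subdifferential. -/
def limitingSubdiff {n : ℕ} (f : EuclideanSpace ℝ (Fin n) → EReal)
    (x : EuclideanSpace ℝ (Fin n)) : Set (EuclideanSpace ℝ (Fin n)) :=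
  {v | ∃ xs vs : ℕ → EuclideanSpace ℝ (Fin n),
      (∀ k, vs k ∈ frechetSubdiff f (xs k)) ∧
      Tendsto xs atTop (nhds x) ∧ Tendsto vs atTop (nhds v) ∧
      Tendsto (fun k => f (xs k)) atTop (nhds (f x))}

/-- The Kurdyka–Łojasiewicz property at a point. -/
def KLAt {n : ℕ} (f : EuclideanSpace ℝ (Fin n) → EReal)
    (xbar : EuclideanSpace ℝ (Fin n)) : Prop :=
  ∃ η : ℝ, 0 < η ∧ ∃ U ∈ nhds xbar, ∃ φ φ' : ℝ → ℝ,
    φ 0 = 0 ∧ (∀ s ∈ Set.Ico (0 : ℝ) η, 0 ≤ φ s) ∧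
    ContinuousOn φ (Set.Ico 0 η) ∧ ConcaveOn ℝ (Set.Ico 0 η) φ ∧
    (∀ s ∈ Set.Ioo (0 : ℝ) η, HasDerivAt φ (φ' s) s ∧ 0 < φ' s) ∧
    ∀ x ∈ U, f xbar < f x → f x < f xbar + (η : EReal) →
      ∀ v ∈ limitingSubdiff f x,
        1 ≤ φ' ((f x).toReal - (f xbar).toReal) * ‖v‖

/-!
The values `f (x k)` decrease to a limit `L` and the steps `‖x (k + 1) - x k‖` tend to `0`.
At a cluster point `x₀` of the bounded sequence, `f x₀ = L` by lower semicontinuity and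
continuity on the domain, and `0 ∈ ∂f x₀` because the graph of `∂f` is closed under
`f`-attentive convergence. The KL inequality at `x₀`, combined with the sufficient decrease,
the relative error bound and the concavity of the desingularizing function `φ`, gives
`2 d (k + 1) ≤ d k + C (φ (r (k + 1)) - φ (r (k + 2)))` with `d k = ‖x (k + 1) - x k‖` and
`r k = f (x k) - L`, as long as `x (k + 1)` stays near `x₀`. Starting close enough to `x₀`, this
telescopes to a bound on the length of the tail which in turn keeps the iterates near `x₀`;
hence the sequence has finite length and converges to `x₀`.
-/

open Topology Finset

section LimitingSubdiff

variable {n : ℕ} {f : EuclideanSpace ℝ (Fin n) → EReal}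

def frechetGraph (f : EuclideanSpace ℝ (Fin n) → EReal) :
    Set (EuclideanSpace ℝ (Fin n) × EuclideanSpace ℝ (Fin n) × EReal) :=
  {p | p.2.1 ∈ frechetSubdiff f p.1 ∧ p.2.2 = f p.1}

theorem mem_limitingSubdiff_iff_mem_closure {x v : EuclideanSpace ℝ (Fin n)} :
    v ∈ limitingSubdiff f x ↔ (x, v, f x) ∈ closure (frechetGraph f) := by
  rw [mem_closure_iff_seq_limit]
  constructor
  · rintro ⟨xs, vs, hF, hx, hv, hf⟩
    exact ⟨fun k => (xs k, vs k, f (xs k)), fun k => ⟨hF k, rfl⟩,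
      hx.prodMk_nhds (hv.prodMk_nhds hf)⟩
  · rintro ⟨p, hp, hlim⟩
    have hf : Tendsto (fun k => f (p k).1) atTop (𝓝 (f x)) :=
      ((((continuous_snd.comp continuous_snd).tendsto _).comp hlim).congr fun k => (hp k).2)
    exact ⟨fun k => (p k).1, fun k => (p k).2.1, fun k => (hp k).1,
      (continuous_fst.tendsto _).comp hlim,
      ((continuous_fst.comp continuous_snd).tendsto _).comp hlim, hf⟩

theorem mem_limitingSubdiff_of_tendsto {ι : Type*} {l : Filter ι} [l.NeBot]
    {y v : ι → EuclideanSpace ℝ (Fin n)} {x u : EuclideanSpace ℝ (Fin n)}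
    (hmem : ∀ i, v i ∈ limitingSubdiff f (y i)) (hy : Tendsto y l (𝓝 x))
    (hv : Tendsto v l (𝓝 u)) (hf : Tendsto (fun i => f (y i)) l (𝓝 (f x))) :
    u ∈ limitingSubdiff f x := by
  rw [mem_limitingSubdiff_iff_mem_closure]
  exact isClosed_closure.mem_of_tendsto (hy.prodMk_nhds (hv.prodMk_nhds hf))
    (Eventually.of_forall fun i => mem_limitingSubdiff_iff_mem_closure.mp (hmem i))

end LimitingSubdiff

theorem LowerSemicontinuous.eq_of_tendsto {X ι : Type*} [TopologicalSpace X] {f : X → EReal}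
    (hlsc : LowerSemicontinuous f) (hcont : ContinuousOn f {z | f z ≠ ⊤})
    {l : Filter ι} [l.NeBot] {y : ι → X} {x : X} {L : EReal} (hL : L ≠ ⊤)
    (hy : Tendsto y l (𝓝 x)) (hfy : Tendsto (fun i => f (y i)) l (𝓝 L)) : f x = L := by
  have hle : f x ≤ L := le_of_forall_lt_imp_le_of_dense fun c hc =>
    ge_of_tendsto hfy ((hy.eventually (hlsc x c hc)).mono fun _ => le_of_lt)
  have hdom : ∀ᶠ i in l, y i ∈ {z | f z ≠ ⊤} :=
    (hfy.eventually_lt_const (lt_top_iff_ne_top.2 hL)).mono fun _ => ne_top_of_lt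
  exact tendsto_nhds_unique
    ((hcont x (ne_top_of_le_ne_top hL hle)).tendsto.comp
      (tendsto_nhdsWithin_iff.2 ⟨hy, hdom⟩)) hfy

theorem exists_real_of_add_le {u : ℕ → EReal} {c : ℕ → ℝ} (h0 : u 0 ≠ ⊤)
    (hbot : ∀ k, u k ≠ ⊥) (hc : ∀ k, 0 ≤ c k) (h : ∀ k, u (k + 1) + c k ≤ u k) :
    ∃ F : ℕ → ℝ, (∀ k, u k = F k) ∧ ∀ k, F (k + 1) + c k ≤ F k := by
  have htop : ∀ k, u k ≠ ⊤ := by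
    intro k
    induction k with
    | zero => exact h0
    | succ k ih =>
      exact ne_top_of_le_ne_top ih ((le_add_of_nonneg_right (by exact_mod_cast hc k)).trans (h k))
  have hF : ∀ k, u k = (u k).toReal := fun k => (EReal.coe_toReal (htop k) (hbot k)).symm
  refine ⟨fun k => (u k).toReal, hF, fun k => ?_⟩
  have := h k
  rwa [hF k, hF (k + 1), ← EReal.coe_add, EReal.coe_le_coe_iff] at this

theorem tendsto_zero_of_add_sq_le {F d : ℕ → ℝ} {a L : ℝ} (ha : 0 < a)
    (hd : ∀ k, 0 ≤ d k) (h : ∀ k, F (k + 1) + a * d k ^ 2 ≤ F k)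
    (hF : Tendsto F atTop (𝓝 L)) :
    Tendsto d atTop (𝓝 0) := by
  have hgap : Tendsto (fun k => √((F k - F (k + 1)) / a)) atTop (𝓝 0) := by
    simpa using ((hF.sub (hF.comp (tendsto_add_atTop_nat 1))).div_const a).sqrt
  refine squeeze_zero hd (fun k => (Real.le_sqrt (hd k) ?_).2 ?_) hgap
  · have := h k; have := sq_nonneg (d k); exact div_nonneg (by nlinarith) ha.le
  · rw [le_div_iff₀ ha]; linarith [h k]

theorem ConcaveOn.mul_sub_le_of_hasDerivAt {S : Set ℝ} {φ : ℝ → ℝ} {φ' s t : ℝ}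
    (hφ : ConcaveOn ℝ S φ) (hs : s ∈ S) (ht : t ∈ S) (hst : s ≤ t)
    (hd : HasDerivAt φ φ' t) :
    φ' * (t - s) ≤ φ t - φ s := by
  rcases hst.eq_or_lt with rfl | hlt
  · simp
  · have := hφ.le_slope_of_hasDerivAt hs ht hlt hd
    rwa [slope_def_field, le_div_iff₀ (sub_pos.2 hlt)] at this

theorem two_mul_add_le_of_concave {φ φ' : ℝ → ℝ} {η a c d₀ d₁ s t : ℝ} (ha : 0 < a)
    (hc : 0 ≤ c) (hd₀ : 0 ≤ d₀) (hφ : ConcaveOn ℝ (Set.Ico 0 η) φ)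
    (hφ' : ∀ u ∈ Set.Ioo 0 η, HasDerivAt φ (φ' u) u) (hs : 0 ≤ s) (ht : t < η)
    (hdesc : s + a * d₁ ^ 2 ≤ t) (hKL : 0 < t → 1 ≤ φ' t * (c * d₀)) :
    2 * d₁ + c / a * φ s ≤ d₀ + c / a * φ t := by
  have hst : s ≤ t := by nlinarith [sq_nonneg d₁]
  rcases (hs.trans hst).eq_or_lt with rfl | htpos
  · obtain rfl : s = 0 := le_antisymm hst hs
    have : d₁ = 0 := pow_eq_zero_iff two_ne_zero |>.mp (by nlinarith [sq_nonneg d₁])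
    simp [this, hd₀]
  have hslope := hφ.mul_sub_le_of_hasDerivAt ⟨hs, hst.trans_lt ht⟩ ⟨htpos.le, ht⟩ hst
    (hφ' t ⟨htpos, ht⟩)
  have hKL := hKL htpos
  have hcd : 0 ≤ c * d₀ := mul_nonneg hc hd₀
  have hp : 0 < φ' t := by
    by_contra! hp
    nlinarith [mul_nonpos_of_nonpos_of_nonneg hp hcd]
  have hΔ : 0 ≤ φ t - φ s := (mul_nonneg hp.le (sub_nonneg.2 hst)).trans hslope
  have hsq : d₁ ^ 2 ≤ d₀ * (c / a * (φ t - φ s)) := by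
    have : a * d₁ ^ 2 ≤ c * d₀ * (φ t - φ s) := calc
      a * d₁ ^ 2 ≤ (t - s) * (φ' t * (c * d₀)) := by nlinarith
      _ = φ' t * (t - s) * (c * d₀) := by ring
      _ ≤ (φ t - φ s) * (c * d₀) := mul_le_mul_of_nonneg_right hslope hcd
      _ = c * d₀ * (φ t - φ s) := by ring
    rw [show d₀ * (c / a * (φ t - φ s)) = c * d₀ * (φ t - φ s) / a by ring,
      le_div_iff₀ ha]
    linarith
  -- AM-GM
  nlinarith [sq_nonneg (d₀ - c / a * (φ t - φ s)), mul_nonneg (div_nonneg hc ha.le) hΔ]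

section FiniteLength

variable {X : Type*} [PseudoMetricSpace X] {x : ℕ → X} {x₀ : X} {ρ : ℝ} {Φ : ℕ → ℝ}

theorem sum_dist_add_le_of_descent (hΦ : ∀ k, 0 ≤ Φ k)
    (hstep : ∀ k, x (k + 1) ∈ Metric.ball x₀ ρ →
      2 * dist (x (k + 1)) (x (k + 2)) + Φ (k + 2) ≤ dist (x k) (x (k + 1)) + Φ (k + 1))
    (hstart : dist (x 0) x₀ + 2 * dist (x 0) (x 1) + Φ 1 < ρ) (M : ℕ) :
    ∑ j ∈ range M, dist (x (j + 1)) (x (j + 2)) + dist (x M) (x (M + 1)) + Φ (M + 1) ≤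
      dist (x 0) (x 1) + Φ 1 := by
  -- The bound at stage `M` keeps `x (M + 1)` within `ρ` of `x₀`, so `hstep M` applies.
  induction M with
  | zero => simp
  | succ M ih =>
    have hball : x (M + 1) ∈ Metric.ball x₀ ρ := by
      have hpath := dist_le_range_sum_dist x (M + 1)
      rw [sum_range_succ'] at hpath
      rw [Metric.mem_ball]
      linarith [dist_triangle_left (x (M + 1)) x₀ (x 0), hΦ (M + 1),
        dist_nonneg (x := x M) (y := x (M + 1))]
    rw [sum_range_succ]
    linarith [hstep M hball]

theorem summable_dist_of_descent_of_start (hΦ : ∀ k, 0 ≤ Φ k)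
    (hstep : ∀ k, x (k + 1) ∈ Metric.ball x₀ ρ →
      2 * dist (x (k + 1)) (x (k + 2)) + Φ (k + 2) ≤ dist (x k) (x (k + 1)) + Φ (k + 1))
    (hstart : dist (x 0) x₀ + 2 * dist (x 0) (x 1) + Φ 1 < ρ) :
    Summable fun k => dist (x k) (x (k + 1)) := by
  refine (summable_nat_add_iff 1).mp <| summable_of_sum_range_le (c := dist (x 0) (x 1) + Φ 1)
    (fun _ => dist_nonneg) fun M => ?_
  linarith [sum_dist_add_le_of_descent hΦ hstep hstart M, hΦ (M + 1),
    dist_nonneg (x := x M) (y := x (M + 1))]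

theorem summable_dist_of_descent (hρ : 0 < ρ) (hx₀ : MapClusterPt x₀ atTop x)
    (hd : Tendsto (fun k => dist (x k) (x (k + 1))) atTop (𝓝 0))
    (hΦ : Tendsto Φ atTop (𝓝 0)) (hΦ_nonneg : ∀ᶠ k in atTop, 0 ≤ Φ k)
    (hstep : ∀ᶠ k in atTop, x (k + 1) ∈ Metric.ball x₀ ρ →
      2 * dist (x (k + 1)) (x (k + 2)) + Φ (k + 2) ≤ dist (x k) (x (k + 1)) + Φ (k + 1)) :
    Summable fun k => dist (x k) (x (k + 1)) := by
  obtain ⟨N, hN⟩ := eventually_atTop.mp (hΦ_nonneg.and hstep)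
  have hsmall : ∀ᶠ k in atTop, 2 * dist (x k) (x (k + 1)) + Φ (k + 1) < ρ / 2 :=
    ((hd.const_mul 2).add (hΦ.comp (tendsto_add_atTop_nat 1))).eventually_lt_const
      (by simpa using half_pos hρ)
  have hnear : ∃ᶠ k in atTop, dist (x k) x₀ < ρ / 2 :=
    mapClusterPt_iff_frequently.mp hx₀ _ (Metric.ball_mem_nhds _ (half_pos hρ))
  obtain ⟨K, ⟨hKN, hK⟩, hKnear⟩ :=
    (((eventually_ge_atTop N).and hsmall).and_frequently hnear).exists
  have htail : Summable fun k => dist (x (K + k)) (x (K + k + 1)) :=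
    summable_dist_of_descent_of_start (x := fun k => x (K + k)) (Φ := fun k => Φ (K + k))
      (fun k => (hN _ (by omega)).1) (fun k => (hN (K + k) (by omega)).2) (by simp only [add_zero]; linarith)
  exact (summable_nat_add_iff K).mp (by simpa only [add_comm] using htail)

end FiniteLength

theorem summable_dist_of_KLAt {n : ℕ} {f : EuclideanSpace ℝ (Fin n) → EReal}
    {x w : ℕ → EuclideanSpace ℝ (Fin n)} {x₀ : EuclideanSpace ℝ (Fin n)} {F : ℕ → ℝ}
    {a c L : ℝ} (ha : 0 < a) (hc : 0 ≤ c) (hF : ∀ k, f (x k) = F k)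
    (hdesc : ∀ k, F (k + 1) + a * dist (x k) (x (k + 1)) ^ 2 ≤ F k)
    (hw : ∀ k, w k ∈ limitingSubdiff f (x (k + 1)))
    (hw_le : ∀ k, ‖w k‖ ≤ c * dist (x k) (x (k + 1)))
    (hFL : Tendsto F atTop (𝓝 L)) (hfx₀ : f x₀ = L) (hx₀ : MapClusterPt x₀ atTop x)
    (hKL : KLAt f x₀) : Summable fun k => dist (x k) (x (k + 1)) := by
  obtain ⟨η, hη, U, hU, φ, φ', hφ0, hφ_nonneg, hφ_cont, hφ_conc, hφ', hKL⟩ := hKL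
  obtain ⟨ρ, hρ, hball⟩ := Metric.mem_nhds_iff.mp hU
  have hanti : Antitone F := antitone_nat_of_succ_le fun k => by nlinarith [hdesc k]
  have hLF : ∀ k, L ≤ F k := hanti.le_of_tendsto hFL
  have hgap : Tendsto (fun k => F k - L) atTop (𝓝[Set.Ico 0 η] 0) := by
    refine tendsto_nhdsWithin_iff.2 ⟨by simpa using hFL.sub_const L, ?_⟩
    filter_upwards [(hFL.sub_const L).eventually_lt_const (by simpa using hη)] with k hk
    exact ⟨sub_nonneg.2 (hLF k), hk⟩
  refine summable_dist_of_descent hρ hx₀ (Φ := fun k => c / a * φ (F k - L))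
    (tendsto_zero_of_add_sq_le ha (fun _ => dist_nonneg) hdesc hFL) ?_ ?_ ?_
  · simpa [hφ0] using ((hφ_cont 0 ⟨le_rfl, hη⟩).tendsto.comp hgap).const_mul (c / a)
  · filter_upwards [hgap self_mem_nhdsWithin] with k hk
    exact mul_nonneg (div_nonneg hc ha.le) (hφ_nonneg _ hk)
  · filter_upwards [hgap self_mem_nhdsWithin] with k hk hxk
    have ht : F (k + 1) - L < η := (sub_le_sub_right (hanti k.le_succ) L).trans_lt hk.2
    refine two_mul_add_le_of_concave ha hc dist_nonneg hφ_conc (fun u hu => (hφ' u hu).1)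
      (sub_nonneg.2 (hLF _)) ht (by linarith [hdesc (k + 1)]) fun htpos => ?_
    have hlt : f x₀ < f (x (k + 1)) := by
      rw [hF, hfx₀]; exact_mod_cast sub_pos.1 htpos
    have hlt' : f (x (k + 1)) < f x₀ + η := by
      rw [hF, hfx₀]; exact_mod_cast sub_lt_iff_lt_add'.1 ht
    have := hKL _ (hball hxk) hlt hlt' (w k) (hw k)
    rw [hF, hfx₀, EReal.toReal_coe, EReal.toReal_coe] at this
    exact this.trans (mul_le_mul_of_nonneg_left (hw_le k) (hφ' _ ⟨htpos, ht⟩).2.le)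

theorem exists_critical_mapClusterPt {n : ℕ} {f : EuclideanSpace ℝ (Fin n) → EReal}
    (hlsc : LowerSemicontinuous f) (hcont : ContinuousOn f {z | f z ≠ ⊤})
    {x w : ℕ → EuclideanSpace ℝ (Fin n)} {F : ℕ → ℝ} {L c R : ℝ}
    (hF : ∀ k, f (x k) = F k) (hFL : Tendsto F atTop (𝓝 L))
    (hd : Tendsto (fun k => dist (x k) (x (k + 1))) atTop (𝓝 0))
    (hw : ∀ k, w k ∈ limitingSubdiff f (x (k + 1)))
    (hw_le : ∀ k, ‖w k‖ ≤ c * dist (x k) (x (k + 1))) (hR : ∀ k, ‖x k‖ ≤ R) :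
    ∃ x₀, MapClusterPt x₀ atTop x ∧ f x₀ = L ∧ 0 ∈ limitingSubdiff f x₀ := by
  obtain ⟨x₀, -, σ, hσ, hxσ⟩ :=
    tendsto_subseq_of_bounded (Metric.isBounded_closedBall (x := 0)) fun k =>
      mem_closedBall_zero_iff.2 (hR k)
  have hd' := hd.comp hσ.tendsto_atTop
  have hy : Tendsto (fun j => x (σ j + 1)) atTop (𝓝 x₀) := hxσ.congr_dist hd'
  have hfy : Tendsto (fun j => f (x (σ j + 1))) atTop (𝓝 (L : EReal)) := by
    simpa only [hF, Function.comp_def] using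
      (EReal.tendsto_coe.2 hFL).comp ((tendsto_add_atTop_nat 1).comp hσ.tendsto_atTop)
  have hfx₀ : f x₀ = L := hlsc.eq_of_tendsto hcont (EReal.coe_ne_top L) hy hfy
  have hw0 : Tendsto (fun j => w (σ j)) atTop (𝓝 0) :=
    squeeze_zero_norm (fun j => hw_le (σ j)) (by simpa using hd'.const_mul c)
  exact ⟨x₀, hxσ.mapClusterPt.of_comp hσ.tendsto_atTop, hfx₀,
    mem_limitingSubdiff_of_tendsto (fun j => hw (σ j)) hy hw0 (hfx₀ ▸ hfy)⟩

theorem stmt_17_general {n : ℕ} (f : EuclideanSpace ℝ (Fin n) → EReal)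
    (hbot : ∀ z, f z ≠ ⊥)
    (hlsc : LowerSemicontinuous f)
    (hbdd : ∃ m : ℝ, ∀ z, (m : EReal) ≤ f z)
    (hcont : ContinuousOn f {z | f z ≠ ⊤})
    (hKL : ∀ z, (limitingSubdiff f z).Nonempty → KLAt f z)
    (lamLow lamUp θ b : ℝ)
    (hlam : 0 < lamLow)
    (hθ : θ ∈ Set.Ioc (0 : ℝ) 1) (hb : 0 < b)
    (lam : ℕ → ℝ) (hlamk : ∀ k, lam k ∈ Set.Icc lamLow lamUp)
    (x : ℕ → EuclideanSpace ℝ (Fin n)) (hx0 : f (x 0) ≠ ⊤)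
    (hH1 : ∀ k, f (x (k + 1)) +
      (((θ * lam k / 2) * ‖x (k + 1) - x k‖ ^ 2 : ℝ) : EReal) ≤ f (x k))
    (hH2 : ∀ k, ∃ w ∈ limitingSubdiff f (x (k + 1)),
      ‖w‖ ≤ b * lam k * ‖x (k + 1) - x k‖)
    (hbound : ∃ R : ℝ, ∀ k, ‖x k‖ ≤ R) :
    ∃ xt : EuclideanSpace ℝ (Fin n),
      Tendsto x atTop (nhds xt) ∧
      (0 : EuclideanSpace ℝ (Fin n)) ∈ limitingSubdiff f xt := by
  obtain ⟨m, hm⟩ := hbdd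
  obtain ⟨R, hR⟩ := hbound
  have hdist : ∀ k, ‖x (k + 1) - x k‖ = dist (x k) (x (k + 1)) := fun k => by
    rw [dist_comm, dist_eq_norm]
  simp only [hdist] at hH1 hH2
  have hθ0 : 0 < θ := hθ.1
  have hlam_pos : ∀ k, 0 < lam k := fun k => hlam.trans_le (hlamk k).1
  have hlamUp : 0 ≤ lamUp := (hlam_pos 0).le.trans (hlamk 0).2
  obtain ⟨F, hF, hdesc⟩ := exists_real_of_add_le hx0 (fun _ => hbot _)
    (fun k => by have := hlam_pos k; positivity) hH1
  have hdesc' : ∀ k, F (k + 1) + θ * lamLow / 2 * dist (x k) (x (k + 1)) ^ 2 ≤ F k := fun k =>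
    (hdesc k).trans' (by gcongr; exact (hlamk k).1)
  have hanti : Antitone F :=
    antitone_nat_of_succ_le fun k => (le_add_of_nonneg_right (by positivity)).trans (hdesc' k)
  obtain ⟨L, hFL⟩ : ∃ L, Tendsto F atTop (𝓝 L) :=
    ⟨_, tendsto_atTop_ciInf hanti
      ⟨m, by rintro _ ⟨k, rfl⟩; exact_mod_cast hF k ▸ hm (x k)⟩⟩
  choose w hw hw_le using hH2
  have hw_le' : ∀ k, ‖w k‖ ≤ b * lamUp * dist (x k) (x (k + 1)) := fun k =>
    (hw_le k).trans (by gcongr; exact (hlamk k).2)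
  obtain ⟨x₀, hx₀, hfx₀, h0⟩ := exists_critical_mapClusterPt hlsc hcont hF hFL
    (tendsto_zero_of_add_sq_le (by positivity) (fun _ => dist_nonneg) hdesc' hFL) hw hw_le' hR
  obtain ⟨xt, hxt⟩ := cauchySeq_tendsto_of_complete <| cauchySeq_of_summable_dist <|
    summable_dist_of_KLAt (by positivity) (by positivity) hF hdesc' hw hw_le' hFL hfx₀ hx₀
      (hKL x₀ ⟨0, h0⟩)
  exact ⟨xt, hxt, eq_of_nhds_neBot (hx₀.clusterPt.mono hxt) ▸ h0⟩

/-- Convergence of the inexact proximal point method for KL functions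
(Euclidean case of Theorem 6.1 of the paper). -/
theorem stmt_17 {n : ℕ} (f : EuclideanSpace ℝ (Fin n) → EReal)
    (hproper : ∃ z, f z ≠ ⊤) (hbot : ∀ z, f z ≠ ⊥)
    (hlsc : LowerSemicontinuous f)
    (hbdd : ∃ m : ℝ, ∀ z, (m : EReal) ≤ f z)
    (hcont : ContinuousOn f {z | f z ≠ ⊤})
    (hKL : ∀ z, (limitingSubdiff f z).Nonempty → KLAt f z)
    (lamLow lamUp θ b : ℝ)
    (hlam : 0 < lamLow) (hlamle : lamLow ≤ lamUp)
    (hθ : θ ∈ Set.Ioc (0 : ℝ) 1) (hb : 0 < b)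
    (lam : ℕ → ℝ) (hlamk : ∀ k, lam k ∈ Set.Icc lamLow lamUp)
    (x : ℕ → EuclideanSpace ℝ (Fin n)) (hx0 : f (x 0) ≠ ⊤)
    (hH1 : ∀ k, f (x (k + 1)) +
      (((θ * lam k / 2) * ‖x (k + 1) - x k‖ ^ 2 : ℝ) : EReal) ≤ f (x k))
    (hH2 : ∀ k, ∃ w ∈ limitingSubdiff f (x (k + 1)),
      ‖w‖ ≤ b * lam k * ‖x (k + 1) - x k‖)
    (hbound : ∃ R : ℝ, ∀ k, ‖x k‖ ≤ R) :
    ∃ xt : EuclideanSpace ℝ (Fin n),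
      Tendsto x atTop (nhds xt) ∧
      (0 : EuclideanSpace ℝ (Fin n)) ∈ limitingSubdiff f xt :=
  stmt_17_general f hbot hlsc hbdd hcont hKL lamLow lamUp θ b hlam hθ hb lam hlamk x hx0 hH1 hH2
    hbound
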